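/- If {u,v} is an edge of P_x that is not a shared edge (u and v are not consecutive in π_y), then the subpath of P_y between u and v contains at least one internal vertex, and among the vertices of this subpath there is one that is last in the order π_x; if this vertex is internal to the subpath, it is a switch vertex of P_y. -/

import Mathlib

open Finset

variable {m : ℕ}

/-- First endpoint of the `e`-th edge of the Hamiltonian path induced by `π`. -/
def pFst (π : Equiv.Perm (Fin (m+1))) (e : Fin m) : Fin (m+1) := π e.castSucc

/-- Second endpoint of the `e`-th edge of the Hamiltonian path induced by `π`. -/
def pSnd (π : Equiv.Perm (Fin (m+1))) (e : Fin m) : Fin (m+1) := π e.succ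

/-- Position of vertex `v` along the Hamiltonian path induced by `π`. -/
def pos (π : Equiv.Perm (Fin (m+1))) (v : Fin (m+1)) : ℕ := (π.symm v : ℕ)

/-- Edges `e` and `f = e+1` of `P_x` form a switch pair: both `P_x`-neighbours of the
middle internal vertex `πx e.succ` lie on the same side of it in `π_y`. -/
def SwitchPairX (πx πy : Equiv.Perm (Fin (m+1))) (e f : Fin m) : Prop :=
  (e : ℕ) + 1 = (f : ℕ) ∧
    ((pos πy (pFst πx e) < pos πy (pSnd πx e) ∧ pos πy (pSnd πx f) < pos πy (pSnd πx e)) ∨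
     (pos πy (pSnd πx e) < pos πy (pFst πx e) ∧ pos πy (pSnd πx e) < pos πy (pSnd πx f)))

/-- Switch pairs of `P_y`: the same with the roles of the permutations swapped. -/
def SwitchPairY (πx πy : Equiv.Perm (Fin (m+1))) (e f : Fin m) : Prop :=
  SwitchPairX πy πx e f

/-- The `P_x`-edge `e` and the `P_y`-edge `f` have the same (unordered) pair of endpoints. -/
def SharedEdge (πx πy : Equiv.Perm (Fin (m+1))) (e f : Fin m) : Prop :=
  (pFst πx e = pFst πy f ∧ pSnd πx e = pSnd πy f) ∨
  (pFst πx e = pSnd πy f ∧ pSnd πx e = pFst πy f)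

/-- Alignment of the `P_x`-edge `e`: positive (`True`) iff its endpoints appear in the
same relative order in `π_x` and `π_y`. -/
def AlignX (πx πy : Equiv.Perm (Fin (m+1))) (e : Fin m) : Prop :=
  pos πy (pFst πx e) < pos πy (pSnd πx e)

/-- Alignment of the `P_y`-edge `e`. -/
def AlignY (πx πy : Equiv.Perm (Fin (m+1))) (e : Fin m) : Prop :=
  pos πx (pFst πy e) < pos πx (pSnd πy e)

/-- `v` is a switch vertex of `P_y`: it is the middle vertex of a switch pair of `P_y`. -/
def IsSwitchVertexY (πx πy : Equiv.Perm (Fin (m+1))) (v : Fin (m+1)) : Prop :=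
  ∃ e f : Fin m, SwitchPairY πx πy e f ∧ pSnd πy e = v

/-!
The endpoints of a non-shared `P_x`-edge are at distance at least two along `P_y`, so the
subpath between them has an internal vertex. Positions in `π_x` are distinct, so the subpath
has a unique `π_x`-last vertex `z`. If `z` is internal, both of its `P_y`-neighbours lie on the
subpath and hence precede `z` in `π_x`, which makes `z` a switch vertex of `P_y`.
-/

theorem Finset.exists_forall_ne_lt_of_injOn {α β : Type*} [LinearOrder β] {f : α → β}
    {s : Finset α} (hs : s.Nonempty) (hf : Set.InjOn f s) :
    ∃ z ∈ s, ∀ u ∈ s, u ≠ z → f u < f z := by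
  obtain ⟨z, hz, hmax⟩ := s.exists_max_image f hs
  exact ⟨z, hz, fun u hu hne => (hmax u hu).lt_of_ne fun h => hne (hf hu hz h)⟩

section Positions

variable (π : Equiv.Perm (Fin (m+1)))

theorem pos_injective : Function.Injective (pos π) :=
  fun _ _ h => π.symm.injective (Fin.ext h)

theorem pos_lt (v : Fin (m+1)) : pos π v < m + 1 := (π.symm v).isLt

@[simp] theorem pos_apply (i : Fin (m+1)) : pos π (π i) = i := by simp [pos]

@[simp] theorem pos_pFst (e : Fin m) : pos π (pFst π e) = e := by simp [pFst]

@[simp] theorem pos_pSnd (e : Fin m) : pos π (pSnd π e) = e + 1 := by simp [pSnd]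

theorem pFst_ne_pSnd (e : Fin m) : pFst π e ≠ pSnd π e := fun h => by
  simpa using congrArg (pos π) h

end Positions

theorem isSwitchVertexY_of_lt_neighbours (πx πy : Equiv.Perm (Fin (m+1)))
    (z : Fin (m+1)) (h0 : 0 < pos πy z) (hm : pos πy z < m)
    (hnbr : ∀ u, pos πy u + 1 = pos πy z ∨ pos πy u = pos πy z + 1 → pos πx u < pos πx z) :
    IsSwitchVertexY πx πy z := by
  have hz : pSnd πy ⟨pos πy z - 1, by omega⟩ = z := pos_injective πy (by simp; omega)
  refine ⟨⟨pos πy z - 1, by omega⟩, ⟨pos πy z, hm⟩, ⟨by simp; omega, Or.inl ⟨?_, ?_⟩⟩, hz⟩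
  · rw [hz]; exact hnbr _ (Or.inl (by simp; omega))
  · rw [hz]; exact hnbr _ (Or.inr (by simp))

/-- if the `P_x`-edge `e` is not a shared edge (its endpoints are not
consecutive in `π_y`), then the subpath of `P_y` between its endpoints contains an
internal vertex, and among the vertices of the subpath there is a last one in the
order `π_x`; if that vertex is internal to the subpath, it is a switch vertex of `P_y`. -/
theorem nonshared_edge_switch {m : ℕ} (πx πy : Equiv.Perm (Fin (m+1))) (e : Fin m)
    (hns : ¬ (pos πy (pFst πx e) + 1 = pos πy (pSnd πx e) ∨
              pos πy (pSnd πx e) + 1 = pos πy (pFst πx e))) :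
    (∃ z : Fin (m+1),
        min (pos πy (pFst πx e)) (pos πy (pSnd πx e)) < pos πy z ∧
        pos πy z < max (pos πy (pFst πx e)) (pos πy (pSnd πx e))) ∧
    ∃ z : Fin (m+1),
      (min (pos πy (pFst πx e)) (pos πy (pSnd πx e)) ≤ pos πy z ∧
        pos πy z ≤ max (pos πy (pFst πx e)) (pos πy (pSnd πx e))) ∧
      (∀ u : Fin (m+1),
        (min (pos πy (pFst πx e)) (pos πy (pSnd πx e)) ≤ pos πy u ∧
          pos πy u ≤ max (pos πy (pFst πx e)) (pos πy (pSnd πx e))) →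
        u ≠ z → pos πx u < pos πx z) ∧
      ((min (pos πy (pFst πx e)) (pos πy (pSnd πx e)) < pos πy z ∧
          pos πy z < max (pos πy (pFst πx e)) (pos πy (pSnd πx e))) →
        IsSwitchVertexY πx πy z) := by
  have hne := (pos_injective πy).ne (pFst_ne_pSnd πx e)
  have ha := pos_lt πy (pFst πx e)
  have hb := pos_lt πy (pSnd πx e)
  set lo := min (pos πy (pFst πx e)) (pos πy (pSnd πx e))
  set hi := max (pos πy (pFst πx e)) (pos πy (pSnd πx e))
  have hgap : lo + 1 < hi := by omega
  have hhi : hi ≤ m := by omega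
  obtain ⟨z, hzS, hzmax⟩ :=
    (univ.filter fun u => lo ≤ pos πy u ∧ pos πy u ≤ hi).exists_forall_ne_lt_of_injOn
      ⟨pFst πx e, by simp; omega⟩ (pos_injective πx).injOn
  simp only [mem_filter, mem_univ, true_and] at hzS hzmax
  refine ⟨⟨πy ⟨lo + 1, by omega⟩, by simp; omega⟩, z, hzS, hzmax, fun ⟨hzlo, hzhi⟩ => ?_⟩
  exact isSwitchVertexY_of_lt_neighbours πx πy z (by omega) (by omega)
    fun u hu => hzmax u (by omega) (by rintro rfl; omega)
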